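/- Let L : [0,∞]² → [0,∞] satisfy L ≤ K₁ (i.e., L(x,y) ≤ x+y), let T₁ be a t-norm, and γ a τ_{L,T₁}-submeasure on Σ. Let t be an additive generator of a continuous Archimedean t-norm T with T ≤ T₁ pointwise. Then the map η_{γ,t} : Σ → [0,∞) defined by η_{γ,t}(E) = sup{ z ∈ [0,∞) : t(γ_E(z)) ≥ z } is a numerical submeasure: η_{γ,t}(∅) = 0, η_{γ,t} is monotone under inclusion, and η_{γ,t}(E∪F) ≤ η_{γ,t}(E) + η_{γ,t}(F) for all E,F ∈ Σ. -/

import Mathlib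

/-!
The additive generator turns the triangle inequality of `γ` into a subadditivity statement:
for `x, y > 0`, `t(γ_{E∪F}(x + y)) ≤ t(γ_E x) + t(γ_F y)`, because
`t⁻¹(t(γ_E x) + t(γ_F y)) ≤ T₁(γ_E x, γ_F y) ≤ γ_{E∪F}(L(x, y)) ≤ γ_{E∪F}(x + y)` and `t` is
antitone. The quantity `η(E)` is the point where `z ↦ t(γ_E z)` crosses the diagonal, and
subadditivity of such crossing points follows by splitting any `z > η(E) + η(F)` as `x + y`
with `x > η(E)` and `y > η(F)`.
-/

open Set
open scoped ENNReal Classical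

noncomputable section

def eps0 (x : ℝ) : ℝ := if 0 < x then 1 else 0

def IsDistrFn (F : ℝ → ℝ) : Prop :=
  Monotone F ∧ (∀ x, x ≤ 0 → F x = 0) ∧ (∀ x, F x ≤ 1)

def IsSetRing {Ω : Type*} (R : Set (Set Ω)) : Prop :=
  ∅ ∈ R ∧ (∀ E F : Set Ω, E ∈ R → F ∈ R → E ∪ F ∈ R) ∧
    (∀ E F : Set Ω, E ∈ R → F ∈ R → E \ F ∈ R)

def IsNumSubmeasure {Ω : Type*} (R : Set (Set Ω)) (η : Set Ω → ℝ≥0∞) : Prop :=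
  η ∅ = 0 ∧ (∀ E F : Set Ω, E ∈ R → F ∈ R → E ⊆ F → η E ≤ η F) ∧
    (∀ E F : Set Ω, E ∈ R → F ∈ R → η (E ∪ F) ≤ η E + η F)

/-- `γ` is a `τ_{L,A}`-submeasure on the ring `R`. -/
def IsTauSub {Ω : Type*} (R : Set (Set Ω)) (L : ℝ → ℝ → ℝ) (A : ℝ → ℝ → ℝ)
    (γ : Set Ω → ℝ → ℝ) : Prop :=
  (∀ E, E ∈ R → IsDistrFn (γ E)) ∧
  (∀ x, γ ∅ x = eps0 x) ∧
  (∀ E F : Set Ω, E ∈ R → F ∈ R → E ⊆ F → ∀ x, γ F x ≤ γ E x) ∧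
  (∀ E F : Set Ω, E ∈ R → F ∈ R → ∀ x y : ℝ, 0 < x → 0 < y →
    A (γ E x) (γ F y) ≤ γ (E ∪ F) (L x y))

def IsTnorm (T : ℝ → ℝ → ℝ) : Prop :=
  (∀ u v, T u v = T v u) ∧ (∀ u v w, T (T u v) w = T u (T v w)) ∧
  (∀ u u' v, u ∈ Icc (0:ℝ) 1 → u' ∈ Icc (0:ℝ) 1 → v ∈ Icc (0:ℝ) 1 → u ≤ u' →
    T u v ≤ T u' v) ∧
  (∀ u ∈ Icc (0:ℝ) 1, T u 1 = u) ∧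
  (∀ u v, u ∈ Icc (0:ℝ) 1 → v ∈ Icc (0:ℝ) 1 → T u v ∈ Icc (0:ℝ) 1)

def IsNumSubmeasureR {Ω : Type*} (R : Set (Set Ω)) (η : Set Ω → ℝ) : Prop :=
  η ∅ = 0 ∧ (∀ E F : Set Ω, E ∈ R → F ∈ R → E ⊆ F → η E ≤ η F) ∧
    (∀ E F : Set Ω, E ∈ R → F ∈ R → η (E ∪ F) ≤ η E + η F)

def crossingSet (f : ℝ → ℝ≥0∞) : Set ℝ := {z : ℝ | 0 ≤ z ∧ ENNReal.ofReal z ≤ f z}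

def crossing (f : ℝ → ℝ≥0∞) : ℝ := sSup (crossingSet f)

section Crossing

variable {f g h : ℝ → ℝ≥0∞}

lemma zero_mem_crossingSet (f : ℝ → ℝ≥0∞) : (0 : ℝ) ∈ crossingSet f := by
  simp [crossingSet]

lemma crossing_nonneg (hf : BddAbove (crossingSet f)) : 0 ≤ crossing f :=
  le_csSup hf (zero_mem_crossingSet f)

lemma lt_ofReal_of_crossing_lt (hf : BddAbove (crossingSet f)) {x : ℝ} (hx : crossing f < x) :
    f x < ENNReal.ofReal x := by
  by_contra! hle
  exact hx.not_ge (le_csSup hf ⟨(crossing_nonneg hf).trans hx.le, hle⟩)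

lemma crossing_eq_zero (hf : ∀ z, 0 < z → f z = 0) : crossing f = 0 := by
  have hset : crossingSet f = {0} := by
    refine subset_antisymm (fun z ⟨hz0, hz⟩ => ?_)
      (singleton_subset_iff.2 (zero_mem_crossingSet f))
    by_contra hne
    have hpos : 0 < z := lt_of_le_of_ne hz0 (Ne.symm hne)
    rw [hf z hpos, nonpos_iff_eq_zero, ENNReal.ofReal_eq_zero] at hz
    exact hpos.not_ge hz
  rw [crossing, hset, csSup_singleton]

lemma crossing_mono (hg : BddAbove (crossingSet g)) (hfg : ∀ z, f z ≤ g z) :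
    crossing f ≤ crossing g :=
  csSup_le_csSup hg ⟨0, zero_mem_crossingSet f⟩
    fun z ⟨hz0, hz⟩ => ⟨hz0, hz.trans (hfg z)⟩

lemma crossing_le_add (hg : BddAbove (crossingSet g)) (hh : BddAbove (crossingSet h))
    (hfgh : ∀ x y, 0 < x → 0 < y → f (x + y) ≤ g x + h y) :
    crossing f ≤ crossing g + crossing h := by
  refine csSup_le ⟨0, zero_mem_crossingSet f⟩ fun z ⟨_, hz⟩ => ?_
  by_contra! hgt
  obtain ⟨d, hd, hdz⟩ : ∃ d, 0 < d ∧ crossing g + crossing h + 2 * d = z :=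
    ⟨(z - crossing g - crossing h) / 2, by linarith, by ring⟩
  have hx : crossing g < crossing g + d := by linarith
  have hy : crossing h < crossing h + d := by linarith
  have hx0 : 0 < crossing g + d := (crossing_nonneg hg).trans_lt hx
  have hy0 : 0 < crossing h + d := (crossing_nonneg hh).trans_lt hy
  have hsum : (crossing g + d) + (crossing h + d) = z := by linarith
  have hlt : f z < ENNReal.ofReal z := by
    calc f z ≤ g (crossing g + d) + h (crossing h + d) := hsum ▸ hfgh _ _ hx0 hy0
      _ < ENNReal.ofReal (crossing g + d) + ENNReal.ofReal (crossing h + d) :=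
        ENNReal.add_lt_add (lt_ofReal_of_crossing_lt hg hx) (lt_ofReal_of_crossing_lt hh hy)
      _ = ENNReal.ofReal z := by rw [← ENNReal.ofReal_add hx0.le hy0.le, hsum]
  exact hlt.not_ge hz

end Crossing

lemma IsDistrFn.mem_Icc {F : ℝ → ℝ} (hF : IsDistrFn F) (x : ℝ) : F x ∈ Icc (0 : ℝ) 1 := by
  obtain ⟨hmono, hzero, hle⟩ := hF
  refine ⟨?_, hle x⟩
  rcases le_or_gt x 0 with hx | hx
  · exact (hzero x hx).ge
  · exact (hzero 0 le_rfl).symm.le.trans (hmono hx.le)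

lemma generator_comp_union_le {Ω : Type*} {R : Set (Set Ω)} {L T₁ : ℝ → ℝ → ℝ}
    {γ : Set Ω → ℝ → ℝ} {t : ℝ → ℝ≥0∞} {tinv : ℝ≥0∞ → ℝ}
    (hL : ∀ x y : ℝ, L x y ≤ x + y) (hγ : IsTauSub R L T₁ γ) (hta : AntitoneOn t (Icc 0 1))
    (htinv_right : ∀ y, t (tinv y) = min (t 0) y) (htinv_mem : ∀ y, tinv y ∈ Icc (0:ℝ) 1)
    (hTT₁ : ∀ u ∈ Icc (0:ℝ) 1, ∀ v ∈ Icc (0:ℝ) 1, tinv (t u + t v) ≤ T₁ u v)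
    {E F : Set Ω} (hE : E ∈ R) (hF : F ∈ R) (hEF : E ∪ F ∈ R) {x y : ℝ}
    (hx : 0 < x) (hy : 0 < y) :
    t (γ (E ∪ F) (x + y)) ≤ t (γ E x) + t (γ F y) := by
  obtain ⟨hdistr, -, -, htri⟩ := hγ
  have hle : tinv (t (γ E x) + t (γ F y)) ≤ γ (E ∪ F) (x + y) :=
    calc tinv (t (γ E x) + t (γ F y))
        ≤ T₁ (γ E x) (γ F y) := hTT₁ _ ((hdistr E hE).mem_Icc x) _ ((hdistr F hF).mem_Icc y)
      _ ≤ γ (E ∪ F) (L x y) := htri E F hE hF x y hx hy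
      _ ≤ γ (E ∪ F) (x + y) := (hdistr _ hEF).1 (hL x y)
  calc t (γ (E ∪ F) (x + y)) ≤ t (tinv (t (γ E x) + t (γ F y))) :=
        hta (htinv_mem _) ((hdistr _ hEF).mem_Icc _) hle
    _ = min (t 0) (t (γ E x) + t (γ F y)) := htinv_right _
    _ ≤ t (γ E x) + t (γ F y) := min_le_right _ _

theorem stmt14_general {Ω : Type*} (R : Set (Set Ω)) (hR : IsSetRing R)
    (L : ℝ → ℝ → ℝ) (hL : ∀ x y : ℝ, L x y ≤ x + y)
    (T₁ : ℝ → ℝ → ℝ)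
    (γ : Set Ω → ℝ → ℝ) (hγ : IsTauSub R L T₁ γ)
    (t : ℝ → ℝ≥0∞) (tinv : ℝ≥0∞ → ℝ)
    (hta : StrictAntiOn t (Icc 0 1)) (ht1 : t 1 = 0)
    (htinv_right : ∀ y, t (tinv y) = min (t 0) y)
    (htinv_mem : ∀ y, tinv y ∈ Icc (0:ℝ) 1)
    (hTT₁ : ∀ u ∈ Icc (0:ℝ) 1, ∀ v ∈ Icc (0:ℝ) 1, tinv (t u + t v) ≤ T₁ u v)
    (hbdd : ∀ E, E ∈ R → BddAbove {z : ℝ | 0 ≤ z ∧ ENNReal.ofReal z ≤ t (γ E z)}) :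
    IsNumSubmeasureR R
      (fun E => sSup {z : ℝ | 0 ≤ z ∧ ENNReal.ofReal z ≤ t (γ E z)}) := by
  obtain ⟨-, hRu, -⟩ := hR
  have hmem : ∀ E ∈ R, ∀ x, γ E x ∈ Icc (0 : ℝ) 1 := fun E hE => (hγ.1 E hE).mem_Icc
  refine ⟨crossing_eq_zero fun z hz => ?_, fun E F hE hF hEF => ?_, fun E F hE hF => ?_⟩
  · rw [hγ.2.1 z, eps0, if_pos hz, ht1]
  · exact crossing_mono (hbdd F hF) fun z =>
      hta.antitoneOn (hmem F hF z) (hmem E hE z) (hγ.2.2.1 E F hE hF hEF z)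
  · exact crossing_le_add (hbdd E hE) (hbdd F hF) fun x y hx hy =>
      generator_comp_union_le hL hγ hta.antitoneOn htinv_right htinv_mem hTT₁ hE hF
        (hRu E F hE hF) hx hy

/-- for `L ≤ K₁`, a `τ_{L,T₁}`-submeasure `γ`, and an additive generator
`t` (with pseudo-inverse `tinv`) of a continuous Archimedean t-norm `T ≤ T₁`, the map
`η_{γ,t}(E) = sup {z ≥ 0 : t(γ_E(z)) ≥ z}` is a numerical submeasure. -/
theorem stmt14 {Ω : Type*} (R : Set (Set Ω)) (hR : IsSetRing R)
    (L : ℝ → ℝ → ℝ) (hL : ∀ x y : ℝ, L x y ≤ x + y)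
    (T₁ : ℝ → ℝ → ℝ) (hT₁ : IsTnorm T₁)
    (γ : Set Ω → ℝ → ℝ) (hγ : IsTauSub R L T₁ γ)
    (t : ℝ → ℝ≥0∞) (tinv : ℝ≥0∞ → ℝ)
    (htc : ContinuousOn t (Icc 0 1)) (hta : StrictAntiOn t (Icc 0 1)) (ht1 : t 1 = 0)
    (htinv_left : ∀ x ∈ Icc (0:ℝ) 1, tinv (t x) = x)
    (htinv_right : ∀ y, t (tinv y) = min (t 0) y)
    (htinv_mem : ∀ y, tinv y ∈ Icc (0:ℝ) 1) (htinv_anti : Antitone tinv)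
    (hTT₁ : ∀ u ∈ Icc (0:ℝ) 1, ∀ v ∈ Icc (0:ℝ) 1, tinv (t u + t v) ≤ T₁ u v)
    (hbdd : ∀ E, E ∈ R → BddAbove {z : ℝ | 0 ≤ z ∧ ENNReal.ofReal z ≤ t (γ E z)}) :
    IsNumSubmeasureR R
      (fun E => sSup {z : ℝ | 0 ≤ z ∧ ENNReal.ofReal z ≤ t (γ E z)}) :=
  stmt14_general R hR L hL T₁ γ hγ t tinv hta ht1 htinv_right htinv_mem hTT₁ hbdd
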